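/- arXiv:1310.2424 — 4 statements merged into one kernel-verified Lean document; each statement's English description precedes it below -/
import Mathlib

section
/- Let T be a tree on vertex set V and u : E(T) → [0,1]. Define the |V|×|V| matrix X by X_{vv} = 1 and, for v ≠ v', X_{vv'} = min over edges ℓ on the unique path in T from v to v' of u(ℓ). Then X is symmetric positive semidefinite. -/
open scoped Classical
open MeasureTheory

/-- A multigraph on vertex type `V` with edge type `E`: each edge has an
unordered pair of endpoints (self-loops and multiple edges allowed). -/
structure Multigraph (V E : Type) where
  ends : E → Sym2 V

namespace Multigraph

variable {V E : Type}

/-- Two vertices are connected using only edges in the subset `S`. -/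
def Connects (G : Multigraph V E) (S : Finset E) (v w : V) : Prop :=
  Relation.ReflTransGen (fun a b => ∃ e ∈ S, G.ends e = s(a, b)) v w

/-- The multigraph is connected. -/
def IsConnected (G : Multigraph V E) [Fintype E] : Prop :=
  ∀ v w : V, G.Connects Finset.univ v w

/-- A spanning tree: a spanning connected edge subset with `|V| - 1` edges. -/
def IsSpanningTree (G : Multigraph V E) [Fintype V] [Fintype E] (T : Finset E) : Prop :=
  (∀ v w : V, G.Connects T v w) ∧ T.card = Fintype.card V - 1

/-- Kruskal's greedy algorithm: process the edges in increasing order of the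
Hepp sector `σ`, inserting an edge iff it does not create a cycle (i.e. iff
its endpoints are not yet connected by the edges selected so far). -/
noncomputable def kruskal (G : Multigraph V E) [Fintype E]
    (σ : E ≃ Fin (Fintype.card E)) : Finset E :=
  ((List.finRange (Fintype.card E)).map σ.symm).foldl
    (fun S e => if ∀ a b, G.ends e = s(a, b) → ¬ G.Connects S a b then insert e S else S) ∅

/-- The symmetric weight `w_s(G,T)`: the fraction of Hepp sectors for which
`T` is the Kruskal leading tree. -/
noncomputable def ws (G : Multigraph V E) [Fintype V] [Fintype E] (T : Finset E) : ℚ :=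
  (Fintype.card {σ : E ≃ Fin (Fintype.card E) // G.kruskal σ = T} : ℚ) /
    (Nat.factorial (Fintype.card E) : ℚ)

/-- Updating the merge relation (which vertices have been identified) after
contracting the edge `e`: the equivalence closure of `M` together with the
pair of endpoints of `e`. -/
def mergeStep (G : Multigraph V E) (M : V → V → Prop) (e : E) : V → V → Prop :=
  Relation.EqvGen (fun a b => M a b ∨ G.ends e = s(a, b))

/-- Updating the block (partition) relation after contracting the trans-block
edge `e`: the new merged vertex forms a singleton block, the endpoints of `e`
are removed from their old blocks, and all other blocks are unchanged. -/
def blockStep (G : Multigraph V E) (M B : V → V → Prop) (e : E) : V → V → Prop :=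
  fun x y => ∀ a b, G.ends e = s(a, b) →
    ((G.mergeStep M e x a ∧ G.mergeStep M e y a) ∨
      (B x y ∧ ¬ G.mergeStep M e x a ∧ ¬ G.mergeStep M e y a))

/-- One contraction step on the pair (merge relation, block relation). -/
def stepPair (G : Multigraph V E) (s : (V → V → Prop) × (V → V → Prop)) (e : E) :
    (V → V → Prop) × (V → V → Prop) :=
  (G.mergeStep s.1 e, G.blockStep s.1 s.2 e)

/-- The state (merge relation, block relation) after contracting, in order,
the edges of the list `L`, starting from the discrete merge relation `Eq` and
initial block (partition) relation `B0`. -/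
def state (G : Multigraph V E) (B0 : V → V → Prop) (L : List E) :
    (V → V → Prop) × (V → V → Prop) :=
  L.foldl G.stepPair (Eq, B0)

/-- An edge is trans-block for the block relation `B` if its endpoints lie in
distinct blocks (in particular it is not a self-loop, even after merging). -/
def TransBlock (G : Multigraph V E) (B : V → V → Prop) (e : E) : Prop :=
  ∀ a b, G.ends e = s(a, b) → ¬ B a b

/-- The ordered list of edges `L` is a trans-block ordered forest for the
initial partition `B0`: each successive edge is trans-block for the
successively contracted partition. -/
def IsTransBlockSeq (G : Multigraph V E) (B0 : V → V → Prop) (L : List E) : Prop :=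
  ∀ p (h : p < L.length), G.TransBlock (G.state B0 (L.take p)).2 (L.get ⟨p, h⟩)

/-- `k_p`: the number of trans-block edges of the `p`-th contracted graph for
the `p`-th contracted partition (already-contracted edges are self-loops of
the contracted graph, hence never trans-block). -/
noncomputable def kcount (G : Multigraph V E) [Fintype E] (B0 : V → V → Prop)
    (L : List E) (p : ℕ) : ℕ :=
  (Finset.univ.filter fun e => G.TransBlock (G.state B0 (L.take p)).2 e).card

/-- First contact index `i(v,v')`: smallest `p` such that `v, v'` lie in
different blocks of `Π_p` (with the convention `i(v,v) = -1, j(v,v) = 0`,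
realized here by taking `i(v,v) = j(v,v) = 0`, which makes the corresponding
products empty, as in the convention `X_{v,v} = 1`). -/
noncomputable def iIdx (G : Multigraph V E) (B0 : V → V → Prop) (L : List E)
    (v v' : V) : ℕ :=
  if v = v' then 0 else sInf {p | ¬ (G.state B0 (L.take p)).2 v v'}

/-- Second contact index `j(v,v')`: smallest `p` such that `v, v'` have been
merged into a single vertex of `G_p`. -/
noncomputable def jIdx (G : Multigraph V E) (B0 : V → V → Prop) (L : List E)
    (v v' : V) : ℕ :=
  sInf {p | (G.state B0 (L.take p)).1 v v'}

/-- Entry of the contact matrix: `X_{v,v'}(u) = ∏_{i(v,v') < k ≤ j(v,v')} u_k`,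
where the variable `u_k` (1 ≤ k ≤ |V|-1) is represented by `w ⟨k-1⟩`. -/
noncomputable def Xent (G : Multigraph V E) (B0 : V → V → Prop) (L : List E)
    (n : ℕ) (w : Fin n → ℝ) (v v' : V) : ℝ :=
  ∏ k : Fin n,
    if G.iIdx B0 L v v' ≤ (k : ℕ) ∧ (k : ℕ) < G.jIdx B0 L v v' then w k else 1

/-- Contact-matrix factor `X_{v(ℓ),v'(ℓ)}(u)` of a (loop) edge `ℓ`. -/
noncomputable def XentE (G : Multigraph V E) (B0 : V → V → Prop) (L : List E)
    (n : ℕ) (w : Fin n → ℝ) (e : E) : ℝ :=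
  ∏ k : Fin n,
    if (∀ a b, G.ends e = s(a, b) →
        (G.iIdx B0 L a b ≤ (k : ℕ) ∧ (k : ℕ) < G.jIdx B0 L a b)) then w k else 1

/-- Tree edge factor `Y_ℓ(u) = ∏_{i(v(ℓ),v'(ℓ)) < k < j(v(ℓ),v'(ℓ))} u_k`. -/
noncomputable def Yent (G : Multigraph V E) (B0 : V → V → Prop) (L : List E)
    (n : ℕ) (w : Fin n → ℝ) (e : E) : ℝ :=
  ∏ k : Fin n,
    if (∀ a b, G.ends e = s(a, b) →
        (G.iIdx B0 L a b ≤ (k : ℕ) ∧ (k : ℕ) + 1 < G.jIdx B0 L a b)) then w k else 1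

/-- The weight `∏_{p=0}^{|V|-2} 1/k_p` of a trans-block ordered tree, and `0`
for a non-admissible ordering. -/
noncomputable def wOrd (G : Multigraph V E) [Fintype V] [Fintype E]
    (B0 : V → V → Prop) (L : List E) : ℚ :=
  if G.IsTransBlockSeq B0 L then
    ∏ p ∈ Finset.range (Fintype.card V - 1), ((G.kcount B0 L p : ℚ))⁻¹
  else 0

/-- The partition tree weight `w^Π(G,T)`: the sum over all admissible
orderings `τ` of `T` of `∏_{p=0}^{|V|-2} 1/k_p(T_τ)`. -/
noncomputable def wPi (G : Multigraph V E) [Fintype V] [Fintype E]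
    (B0 : V → V → Prop) (T : Finset E) : ℚ :=
  ∑ τ : Fin T.card ≃ {e // e ∈ T}, G.wOrd B0 (List.ofFn fun i => ((τ i : E)))

end Multigraph

/-! The path-minimum matrix of a tree is ultrametric, `min (X v w) (X w v') ≤ X v v'`, because
the path from `v` to `v'` only uses edges of the paths `v → w` and `w → v'`. Hence for every
threshold `t` the relation `t ≤ X v v'` is symmetric and transitive, and its 0/1 matrix is the
Gram matrix of the indicator vectors of its classes. Since the entries are nonnegative,
`X v v' = ∫ t in Ioi 0, 1[t ≤ X v v']`, so the quadratic form of `X` is an integral of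
nonnegative quadratic forms. -/

open Set

theorem integral_Ioi_indicator_Iic_one {c : ℝ} (hc : 0 ≤ c) :
    ∫ t in Ioi 0, (Iic c).indicator (1 : ℝ → ℝ) t = c := by
  rw [integral_indicator_one measurableSet_Iic, measureReal_restrict_apply measurableSet_Iic,
    inter_comm, Ioi_inter_Iic, Real.volume_real_Ioc, sub_zero, max_eq_left hc]

theorem integrableOn_Ioi_indicator_Iic_one (c : ℝ) :
    IntegrableOn ((Iic c).indicator (1 : ℝ → ℝ)) (Ioi 0) := by
  rw [integrableOn_indicator_iff measurableSet_Iic, inter_comm, Ioi_inter_Iic]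
  exact integrableOn_const measure_Ioc_lt_top.ne

namespace Matrix

variable {n : Type*}

theorem posSemidef_of_forall_finset_submatrix {R : Type*} [Ring R] [PartialOrder R] [StarRing R]
    {A : Matrix n n R} (hA : ∀ s : Finset n, (A.submatrix ((↑) : s → n) (↑)).PosSemidef) :
    A.PosSemidef := by
  refine ⟨IsHermitian.ext_iff.2 fun i j => ?_, fun x => ?_⟩
  · exact (hA {i, j}).isHermitian.apply ⟨i, by simp⟩ ⟨j, by simp⟩
  · have h := (hA x.support).dotProduct_mulVec_nonneg fun i => x i
    convert h using 1
    simp only [Finsupp.sum, dotProduct, mulVec, submatrix_apply, Finset.mul_sum,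
      Finset.univ_eq_attach, Pi.star_apply, mul_assoc]
    rw [← Finset.sum_attach]
    refine Finset.sum_congr rfl fun i _ => ?_
    rw [← Finset.sum_attach]

theorem posSemidef_of_symmetric_of_transitive [Fintype n] {r : n → n → Prop} [DecidableRel r]
    (hsymm : ∀ ⦃i j⦄, r i j → r j i) (htrans : ∀ ⦃i j k⦄, r i j → r j k → r i k) :
    (of fun i j => if r i j then (1 : ℝ) else 0).PosSemidef := by
  -- `r` need not be reflexive: the rows of `B` at the `i` with `¬ r i i` vanish.
  let s : Setoid n :=
    ⟨fun i j => r i j ∨ i = j,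
      ⟨fun _ => .inr rfl, fun h => h.imp (hsymm ·) Eq.symm, by
        rintro i j k (hij | rfl) (hjk | rfl)
        exacts [.inl (htrans hij hjk), .inl hij, .inl hjk, .inr rfl]⟩⟩
  let B : Matrix n (Quotient s) ℝ := of fun i q => if r i i ∧ Quotient.mk s i = q then 1 else 0
  convert posSemidef_self_mul_conjTranspose B using 1
  ext i j
  have hr : r i j ↔ r i i ∧ r j j ∧ (r i j ∨ i = j) := by
    refine ⟨fun h => ⟨htrans h (hsymm h), htrans (hsymm h) h, .inl h⟩, ?_⟩
    rintro ⟨hi, -, hij | rfl⟩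
    exacts [hij, hi]
  simp only [B, s, of_apply, conjTranspose_eq_transpose_of_trivial, mul_apply, transpose_apply,
    ite_and, mul_ite, mul_one, mul_zero, Finset.sum_ite_irrel, Finset.sum_ite_eq, Finset.mem_univ,
    if_true, Quotient.eq, Finset.sum_const_zero]
  split_ifs <;> first | rfl | tauto

theorem dotProduct_mulVec_eq_integral_indicator [Fintype n] {A : Matrix n n ℝ}
    (hA : ∀ i j, 0 ≤ A i j) (x y : n → ℝ) :
    x ⬝ᵥ A *ᵥ y =
      ∫ t in Ioi 0, x ⬝ᵥ (of fun i j => (Iic (A i j)).indicator (1 : ℝ → ℝ) t) *ᵥ y := by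
  have hint (i j : n) :
      Integrable (fun t => x i * ((Iic (A i j)).indicator (1 : ℝ → ℝ) t * y j))
        (volume.restrict (Ioi 0)) :=
    ((integrableOn_Ioi_indicator_Iic_one _).mul_const _).const_mul _
  simp only [dotProduct, mulVec, of_apply, Finset.mul_sum]
  rw [integral_finsetSum _ fun i _ => integrable_finsetSum _ fun j _ => hint i j]
  refine Finset.sum_congr rfl fun i _ => ?_
  rw [integral_finsetSum _ fun j _ => hint i j]
  refine Finset.sum_congr rfl fun j _ => ?_
  rw [integral_const_mul, integral_mul_const, integral_Ioi_indicator_Iic_one (hA i j)]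

def IsUltrametric {α : Type*} [LinearOrder α] (A : Matrix n n α) : Prop :=
  ∀ i j k, min (A i j) (A j k) ≤ A i k

theorem IsUltrametric.posSemidef {A : Matrix n n ℝ} (hU : A.IsUltrametric) (hsymm : A.IsSymm)
    (hnonneg : ∀ i j, 0 ≤ A i j) : A.PosSemidef := by
  refine posSemidef_of_forall_finset_submatrix fun s => ?_
  refine .of_dotProduct_mulVec_nonneg (isHermitian_iff_isSymm.2 (hsymm.submatrix _)) fun x => ?_
  rw [star_trivial, dotProduct_mulVec_eq_integral_indicator
    (A := A.submatrix ((↑) : s → n) (↑)) (fun _ _ => hnonneg _ _)]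
  refine setIntegral_nonneg measurableSet_Ioi fun t _ => ?_
  have hlevel := posSemidef_of_symmetric_of_transitive (r := fun i j : s => t ≤ A i j)
    (fun i j h => (hsymm.apply i j).symm ▸ h)
    fun i j k hij hjk => (le_min hij hjk).trans (hU _ _ _)
  simpa [indicator_apply] using hlevel.dotProduct_mulVec_nonneg x

end Matrix
namespace SimpleGraph.Walk

variable {V : Type*} {G : SimpleGraph V} {u : Sym2 V → ℝ} {v w x : V}

def bottleneck (u : Sym2 V → ℝ) (p : G.Walk v w) : ℝ := (p.edges.map u).foldr min 1

theorem le_bottleneck_iff {p : G.Walk v w} {t : ℝ} :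
    t ≤ p.bottleneck u ↔ t ≤ 1 ∧ ∀ e ∈ p.edges, t ≤ u e := by
  rw [bottleneck]
  induction p.edges with
  | nil => simp
  | cons e l ih => simp [ih, and_left_comm]

theorem bottleneck_nonneg (hu : ∀ e, 0 ≤ u e) (p : G.Walk v w) : 0 ≤ p.bottleneck u :=
  le_bottleneck_iff.2 ⟨zero_le_one, fun e _ => hu e⟩

theorem min_bottleneck_le_bottleneck_bypass_append [DecidableEq V] (p : G.Walk v w)
    (q : G.Walk w x) :
    min (p.bottleneck u) (q.bottleneck u) ≤ (p.append q).bypass.bottleneck u := by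
  have hp := le_bottleneck_iff.1 (le_refl (p.bottleneck u))
  have hq := le_bottleneck_iff.1 (le_refl (q.bottleneck u))
  refine le_bottleneck_iff.2 ⟨min_le_left _ _ |>.trans hp.1, fun e he => ?_⟩
  rcases List.mem_append.1 (edges_append p q ▸ edges_bypass_subset_edges _ he) with h | h
  · exact (min_le_left _ _).trans (hp.2 e h)
  · exact (min_le_right _ _).trans (hq.2 e h)

end SimpleGraph.Walk

theorem tree_path_min_matrix_posSemidef_general
    {V : Type}
    (T : SimpleGraph V) (hT : T.IsTree)
    (u : Sym2 V → ℝ) (hu : ∀ e, u e ∈ Set.Icc (0 : ℝ) 1)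
    (X : Matrix V V ℝ)
    (hdiag : ∀ v, X v v = 1)
    (hsymm : ∀ v v', X v v' = X v' v)
    (hpath : ∀ v v' : V, v ≠ v' → ∀ p : T.Path v v',
      X v v' = ((p : T.Walk v v').edges.map u).foldr min 1) :
    X.PosSemidef := by
  have hX (v v' : V) (p : T.Path v v') : X v v' = (p : T.Walk v v').bottleneck u := by
    obtain rfl | hne := eq_or_ne v v'
    · rw [hdiag, SimpleGraph.Path.loop_eq p]
      rfl
    · exact hpath v v' hne p
  have hpaths (v v' : V) : Nonempty (T.Path v v') :=
    Nonempty.map SimpleGraph.Walk.toPath (hT.connected.preconnected v v')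
  refine Matrix.IsUltrametric.posSemidef (fun v w v' => ?_)
    (Matrix.IsSymm.ext_iff.2 fun v v' => hsymm v' v) fun v v' => ?_
  · obtain ⟨p⟩ := hpaths v w
    obtain ⟨q⟩ := hpaths w v'
    rw [hX v w p, hX w v' q, hX v v' ((p : T.Walk v w).append q).toPath]
    exact SimpleGraph.Walk.min_bottleneck_le_bottleneck_bypass_append _ _
  · obtain ⟨p⟩ := hpaths v v'
    rw [hX v v' p]
    exact SimpleGraph.Walk.bottleneck_nonneg (fun e => (hu e).1) _

/-- for a tree `T` on `V` and edge values `u : E(T) → [0,1]`, the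
matrix with unit diagonal whose off-diagonal entry `X_{v,v'}` is the minimum
of `u` over the edges of the unique path in `T` from `v` to `v'` is symmetric
positive semidefinite. -/
theorem tree_path_min_matrix_posSemidef
    {V : Type} [Fintype V] [DecidableEq V]
    (T : SimpleGraph V) (hT : T.IsTree)
    (u : Sym2 V → ℝ) (hu : ∀ e, u e ∈ Set.Icc (0 : ℝ) 1)
    (X : Matrix V V ℝ)
    (hdiag : ∀ v, X v v = 1)
    (hsymm : ∀ v v', X v v' = X v' v)
    (hpath : ∀ v v' : V, v ≠ v' → ∀ p : T.Path v v',
      X v v' = ((p : T.Walk v v').edges.map u).foldr min 1) :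
    X.PosSemidef :=
  tree_path_min_matrix_posSemidef_general T hT u hu X hdiag hsymm hpath
end

section
/- For any vertices v, v' of G and any trans-block ordered spanning tree T_τ with associated sequence of graphs and partitions (G_p, Π_p), the first contact index i(v,v') (the smallest p such that v and v' lie in different blocks of Π_p) is strictly smaller than the second contact index j(v,v') (the smallest p such that v and v' have been merged into a single vertex of G_p). -/
open scoped Classical
open MeasureTheory

section Aux

namespace Multigraph

variable {V E : Type}

private lemma mergeStep_equiv (G : Multigraph V E) (M : V → V → Prop) (e : E) :
    Equivalence (G.mergeStep M e) := Relation.EqvGen.is_equivalence _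

private lemma le_mergeStep (G : Multigraph V E) {M : V → V → Prop} (e : E)
    {x y : V} (h : M x y) : G.mergeStep M e x y :=
  Relation.EqvGen.rel _ _ (Or.inl h)

private lemma mergeStep_edge (G : Multigraph V E) (M : V → V → Prop) {e : E}
    {a b : V} (hab : G.ends e = s(a, b)) : G.mergeStep M e a b :=
  Relation.EqvGen.rel _ _ (Or.inr hab)

private lemma mergeStep_char (G : Multigraph V E) {M : V → V → Prop}
    (hM : Equivalence M) (e : E) {a b : V} (hab : G.ends e = s(a, b))
    {x y : V} (h : G.mergeStep M e x y) :
    M x y ∨ (M x a ∧ M b y) ∨ (M x b ∧ M a y) := by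
  induction h with
  | rel p q hpq =>
    rcases hpq with h | h
    · exact Or.inl h
    · rw [hab, Sym2.eq_iff] at h
      rcases h with ⟨rfl, rfl⟩ | ⟨rfl, rfl⟩
      · exact Or.inr (Or.inl ⟨hM.refl _, hM.refl _⟩)
      · exact Or.inr (Or.inr ⟨hM.refl _, hM.refl _⟩)
  | refl p => exact Or.inl (hM.refl _)
  | symm p q _ ih =>
    rcases ih with h | ⟨h1, h2⟩ | ⟨h1, h2⟩
    · exact Or.inl (hM.symm h)
    · exact Or.inr (Or.inr ⟨hM.symm h2, hM.symm h1⟩)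
    · exact Or.inr (Or.inl ⟨hM.symm h2, hM.symm h1⟩)
  | trans p q r _ _ ih1 ih2 =>
    rcases ih1 with h | ⟨h1, h2⟩ | ⟨h1, h2⟩ <;>
      rcases ih2 with h' | ⟨h1', h2'⟩ | ⟨h1', h2'⟩
    · exact Or.inl (hM.trans h h')
    · exact Or.inr (Or.inl ⟨hM.trans h h1', h2'⟩)
    · exact Or.inr (Or.inr ⟨hM.trans h h1', h2'⟩)
    · exact Or.inr (Or.inl ⟨h1, hM.trans h2 h'⟩)
    · exact Or.inl (hM.trans (hM.trans h1 (hM.symm (hM.trans h2 h1'))) h2')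
    · exact Or.inl (hM.trans h1 h2')
    · exact Or.inr (Or.inr ⟨h1, hM.trans h2 h'⟩)
    · exact Or.inl (hM.trans h1 h2')
    · exact Or.inl (hM.trans (hM.trans h1 (hM.symm (hM.trans h2 h1'))) h2')

private lemma blockStep_equiv (G : Multigraph V E) {M B : V → V → Prop}
    (hB : Equivalence B) (e : E) :
    Equivalence (G.blockStep M B e) := by
  have hM' := G.mergeStep_equiv M e
  constructor
  · intro x a b hab
    by_cases h : G.mergeStep M e x a
    · exact Or.inl ⟨h, h⟩
    · exact Or.inr ⟨hB.refl x, h, h⟩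
  · intro x y hxy a b hab
    rcases hxy a b hab with ⟨h1, h2⟩ | ⟨h1, h2, h3⟩
    · exact Or.inl ⟨h2, h1⟩
    · exact Or.inr ⟨hB.symm h1, h3, h2⟩
  · intro x y z hxy hyz a b hab
    rcases hxy a b hab with ⟨h1, h2⟩ | ⟨h1, h2, h3⟩ <;>
      rcases hyz a b hab with ⟨h1', h2'⟩ | ⟨h1', h2', h3'⟩
    · exact Or.inl ⟨h1, h2'⟩
    · exact absurd h2 h2'
    · exact absurd h1' h3
    · exact Or.inr ⟨hB.trans h1 h1', h2, h3'⟩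

private lemma mergeStep_le_blockStep (G : Multigraph V E) {M B : V → V → Prop}
    (hM : Equivalence M) (hMB : ∀ x y, M x y → B x y) (e : E)
    {x y : V} (h : G.mergeStep M e x y) : G.blockStep M B e x y := by
  have hM' := G.mergeStep_equiv M e
  intro a b hab
  by_cases hxa : G.mergeStep M e x a
  · exact Or.inl ⟨hxa, hM'.trans (hM'.symm h) hxa⟩
  · refine Or.inr ⟨?_, hxa, fun hya => hxa (hM'.trans h hya)⟩
    rcases G.mergeStep_char hM e hab h with h0 | ⟨h1, _⟩ | ⟨h1, _⟩
    · exact hMB _ _ h0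
    · exact absurd (G.le_mergeStep e h1) hxa
    · exact absurd (hM'.trans (G.le_mergeStep e h1)
        (hM'.symm (G.mergeStep_edge M hab))) hxa

private lemma state_invariant (G : Multigraph V E) {B0 : V → V → Prop}
    (hB0 : Equivalence B0) (L : List E) :
    Equivalence (G.state B0 L).1 ∧ Equivalence (G.state B0 L).2 ∧
      ∀ x y, (G.state B0 L).1 x y → (G.state B0 L).2 x y := by
  induction L using List.reverseRecOn with
  | nil => exact ⟨eq_equivalence, hB0, fun x y h => h ▸ hB0.refl x⟩
  | append_singleton l e ih =>
    obtain ⟨h1, h2, h3⟩ := ih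
    have hs : G.state B0 (l ++ [e]) = G.stepPair (G.state B0 l) e := by
      simp [state, List.foldl_append]
    rw [hs]
    exact ⟨G.mergeStep_equiv _ _, G.blockStep_equiv h2 e,
      fun x y h => G.mergeStep_le_blockStep h1 h3 e h⟩

private lemma state_take_succ (G : Multigraph V E) (B0 : V → V → Prop) (L : List E)
    {q : ℕ} (hq : q < L.length) :
    G.state B0 (L.take (q + 1)) = G.stepPair (G.state B0 (L.take q)) (L.get ⟨q, hq⟩) := by
  have h1 : L.take (q + 1) = L.take q ++ [L.get ⟨q, hq⟩] := by
    rw [List.take_succ, List.getElem?_eq_getElem hq]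
    simp
  rw [state, h1, List.foldl_append]
  rfl

end Multigraph

end Aux

/-- for any two distinct vertices `v, v'` and a trans-block
ordered spanning tree, the first contact index (first step at which `v, v'`
lie in different blocks) is strictly smaller than the second contact index
(first step at which `v, v'` are merged). -/
theorem first_contact_lt_second_contact
    {V E : Type} [Fintype V] [Fintype E] [Nonempty V]
    (G : Multigraph V E) (hG : G.IsConnected)
    (B0 : V → V → Prop) (hB0 : Equivalence B0)
    (hnt : ∃ v w : V, ¬ B0 v w)
    (L : List E) (hlen : L.length = Fintype.card V - 1) (hnd : L.Nodup)
    (hTB : G.IsTransBlockSeq B0 L)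
    (hspan : ∀ v w : V, (G.state B0 L).1 v w)
    (v v' : V) (hne : v ≠ v') (i j : ℕ)
    (hi : ¬ (G.state B0 (L.take i)).2 v v')
    (hi' : ∀ q < i, (G.state B0 (L.take q)).2 v v')
    (hj : (G.state B0 (L.take j)).1 v v')
    (hj' : ∀ q < j, ¬ (G.state B0 (L.take q)).1 v v') :
    i < j := by
  have hj0 : j ≠ 0 := by
    rintro rfl
    simp only [List.take_zero, Multigraph.state, List.foldl_nil] at hj
    exact hne hj
  have hjlen : j ≤ L.length := by
    by_contra h
    push_neg at h
    have h1 : L.take (j - 1) = L := List.take_of_length_le (by omega)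
    have h2 : L.take j = L := List.take_of_length_le (by omega)
    exact hj' (j - 1) (by omega) (by rw [h1, ← h2]; exact hj)
  obtain ⟨q, rfl⟩ : ∃ q, j = q + 1 := ⟨j - 1, by omega⟩
  have hq : q < L.length := by omega
  set e := L.get ⟨q, hq⟩ with he
  have htb := hTB q hq
  obtain ⟨a, b, hab⟩ : ∃ a b, G.ends e = s(a, b) := by
    rcases Sym2.exists.mp ⟨G.ends e, rfl⟩ with ⟨a, b, h⟩
    exact ⟨a, b, h⟩
  obtain ⟨hMeq, hBeq, hMB⟩ := G.state_invariant hB0 (L.take q)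
  set M := (G.state B0 (L.take q)).1 with hM
  set B := (G.state B0 (L.take q)).2 with hB
  have hstep := G.state_take_succ B0 L hq
  rw [hstep] at hj
  have hM' : G.mergeStep M e v v' := hj
  have hMvv : ¬ M v v' := hj' q (Nat.lt_succ_self q)
  have hBab : ¬ B a b := htb a b hab
  have hBvv : ¬ B v v' := by
    intro hbv
    rcases G.mergeStep_char hMeq e hab hM' with h | ⟨h1, h2⟩ | ⟨h1, h2⟩
    · exact hMvv h
    · exact hBab (hBeq.trans (hBeq.symm (hMB _ _ h1))
        (hBeq.trans hbv (hBeq.symm (hMB _ _ h2))))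
    · exact hBab (hBeq.trans (hMB _ _ h2)
        (hBeq.trans (hBeq.symm hbv) (hMB _ _ h1)))
  have hqi : ¬ q < i := fun h => hBvv (hi' q h)
  omega
end

section
/- Let G be a finite connected multigraph with non-trivial vertex partition Π, T_τ a trans-block ordered spanning tree of G with associated sequence of partitions Π_0, ..., Π_{|V|−2}, and let k_p be the number of trans-block edges of G_p for Π_p. Then the weight w^Π(G, T_τ) defined by the integral ∫_{[0,1]^{|V|−1}} (∏_{ℓ∈T} Y_ℓ(u)) (∏_{ℓ∉T} X_{v(ℓ)v'(ℓ)}(u)) du equals ∏_{p=0}^{|V|−2} 1/k_p. -/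
/-! The variable `u_{k+1}` occurs in `X_ℓ` exactly when `ℓ` is trans-block for `Π_k`: the
endpoints of `ℓ` lie in distinct blocks from step `i` on, until they are merged at step `j`.
For a tree edge `ℓ` contracted at step `q` one has `j = q + 1`, so `u_{k+1}` occurs in `Y_ℓ`
exactly when `ℓ` is trans-block for `Π_k` and `k ≠ q`. Hence the integrand is
`∏_k u_{k+1} ^ (k_k - 1)`, and Fubini gives `∏_k 1 / k_k`. -/

open scoped Classical
open MeasureTheory

theorem integral_Icc_zero_one_pow (m : ℕ) :
    ∫ x in Set.Icc (0 : ℝ) 1, x ^ m = ((m : ℝ) + 1)⁻¹ := by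
  rw [integral_Icc_eq_integral_Ioc, ← intervalIntegral.integral_of_le zero_le_one, integral_pow]
  simp

theorem integral_unitCube_prod_pow {ι : Type*} [Fintype ι] (m : ι → ℕ) :
    ∫ w in Set.univ.pi fun _ : ι => Set.Icc (0 : ℝ) 1, ∏ k, w k ^ m k =
      ∏ k, ((m k : ℝ) + 1)⁻¹ := by
  rw [volume_pi, Measure.restrict_pi_pi, integral_fintype_prod_eq_prod (fun k x => x ^ m k)]
  simp only [integral_Icc_zero_one_pow]

theorem Finset.prod_prod_ite_eq_prod_pow {ι α M : Type*} [CommMonoid M] (s : Finset α)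
    (t : Finset ι) (P : ι → α → Prop) [∀ k, DecidablePred (P k)] (w : ι → M) :
    ∏ e ∈ s, ∏ k ∈ t, (if P k e then w k else 1) =
      ∏ k ∈ t, w k ^ (s.filter (P k)).card := by
  rw [Finset.prod_comm]
  simp only [← Finset.prod_filter, Finset.prod_const]

namespace Multigraph

variable {V E : Type} (G : Multigraph V E)

def IsContractionState (s : (V → V → Prop) × (V → V → Prop)) : Prop :=
  Equivalence s.1 ∧ Equivalence s.2 ∧ s.1 ≤ s.2

theorem exists_ends_eq (e : E) : ∃ a b, G.ends e = s(a, b) := by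
  induction G.ends e using Sym2.ind with
  | _ a b => exact ⟨a, b, rfl⟩

section Step

variable {M B : V → V → Prop} {e : E} {a b : V}

theorem mergeStep_of_rel {x y : V} (h : M x y) : G.mergeStep M e x y :=
  .rel _ _ (.inl h)

theorem mergeStep_of_ends (hab : G.ends e = s(a, b)) : G.mergeStep M e a b :=
  .rel _ _ (.inr hab)

theorem equivalence_mergeStep : Equivalence (G.mergeStep M e) :=
  Relation.EqvGen.is_equivalence _

theorem rel_or_of_mergeStep (hM : Equivalence M) (hab : G.ends e = s(a, b)) {x y : V}
    (h : G.mergeStep M e x y) : M x y ∨ ((M x a ∨ M x b) ∧ (M y a ∨ M y b)) := by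
  have hP : ∀ {x y}, M x y → (M y a ∨ M y b) → (M x a ∨ M x b) :=
    fun hxy => Or.imp (hM.trans hxy) (hM.trans hxy)
  induction h with
  | rel u v huv =>
    rcases huv with huv | huv
    · exact .inl huv
    · rcases Sym2.eq_iff.1 (hab.symm.trans huv) with ⟨rfl, rfl⟩ | ⟨rfl, rfl⟩
      · exact .inr ⟨.inl (hM.refl _), .inr (hM.refl _)⟩
      · exact .inr ⟨.inr (hM.refl _), .inl (hM.refl _)⟩
  | refl u => exact .inl (hM.refl u)
  | symm u v _ ih => exact ih.imp hM.symm And.symm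
  | trans u v w _ _ ih₁ ih₂ =>
    rcases ih₁ with h₁ | ⟨hu, hv⟩ <;> rcases ih₂ with h₂ | ⟨hv', hw⟩
    · exact .inl (hM.trans h₁ h₂)
    · exact .inr ⟨hP h₁ hv', hw⟩
    · exact .inr ⟨hu, hP (hM.symm h₂) hv⟩
    · exact .inr ⟨hu, hw⟩

theorem IsContractionState.stepPair {s : (V → V → Prop) × (V → V → Prop)}
    (hs : IsContractionState s) (e : E) : IsContractionState (G.stepPair s e) := by
  obtain ⟨hM, hB, hMB⟩ := hs
  have hM' := G.equivalence_mergeStep (M := s.1) (e := e)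
  refine ⟨hM', ⟨fun x a b _ => ?_, fun hxy a b hab => ?_, fun hxy hyz a b hab => ?_⟩,
    fun x y hxy a b hab => ?_⟩
  · by_cases h : G.mergeStep s.1 e x a
    · exact .inl ⟨h, h⟩
    · exact .inr ⟨hB.refl x, h, h⟩
  · exact (hxy a b hab).imp And.symm fun ⟨h₁, h₂, h₃⟩ => ⟨hB.symm h₁, h₃, h₂⟩
  · rcases hxy a b hab with ⟨h₁, h₂⟩ | ⟨h₁, h₂, h₃⟩ <;>
      rcases hyz a b hab with ⟨h₄, h₅⟩ | ⟨h₄, h₅, h₆⟩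
    · exact .inl ⟨h₁, h₅⟩
    · exact absurd h₂ h₅
    · exact absurd h₄ h₃
    · exact .inr ⟨hB.trans h₁ h₄, h₂, h₆⟩
  · by_cases hxa : G.mergeStep s.1 e x a
    · exact .inl ⟨hxa, hM'.trans (hM'.symm hxy) hxa⟩
    refine .inr ⟨?_, hxa, fun hya => hxa (hM'.trans hxy hya)⟩
    rcases G.rel_or_of_mergeStep hM hab hxy with hxy' | ⟨hx | hx, -⟩
    · exact hMB x y hxy'
    · exact absurd (G.mergeStep_of_rel hx) hxa
    · exact absurd (hM'.trans (G.mergeStep_of_rel hx) (hM'.symm (G.mergeStep_of_ends hab))) hxa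

theorem rel_or_mergeStep_of_blockStep {x y : V} (h : G.blockStep M B e x y) :
    B x y ∨ G.mergeStep M e x y := by
  obtain ⟨a, b, hab⟩ := G.exists_ends_eq e
  rcases h a b hab with ⟨hx, hy⟩ | ⟨hxy, -⟩
  · exact .inr (G.equivalence_mergeStep.trans hx (G.equivalence_mergeStep.symm hy))
  · exact .inl hxy

theorem not_rel_of_mergeStep (hs : IsContractionState (M, B)) (hab : G.ends e = s(a, b))
    (he : ¬ B a b) {x y : V} (hnew : ¬ M x y) (h : G.mergeStep M e x y) : ¬ B x y := by
  obtain ⟨hM, hB, hMB⟩ := hs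
  intro hxy
  rcases G.rel_or_of_mergeStep hM hab h with h | ⟨hx | hx, hy | hy⟩
  · exact hnew h
  · exact hnew (hM.trans hx (hM.symm hy))
  · exact he (hB.trans (hB.symm (hMB x a hx)) (hB.trans hxy (hMB y b hy)))
  · exact he (hB.trans (hB.symm (hMB y a hy)) (hB.trans (hB.symm hxy) (hMB x b hx)))
  · exact hnew (hM.trans hx (hM.symm hy))

end Step

variable (B0 : V → V → Prop) (L : List E)

theorem isContractionState_state (hB0 : Equivalence B0) (l : List E) :
    IsContractionState (G.state B0 l) := by
  suffices ∀ s, IsContractionState s → IsContractionState (l.foldl G.stepPair s) from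
    this _ ⟨eq_equivalence, hB0, fun x y h => h ▸ hB0.refl x⟩
  induction l with
  | nil => exact fun _ hs => hs
  | cons e l ih => exact fun s hs => ih _ (hs.stepPair G e)

theorem state_take_succ_s10 {p : ℕ} (hp : p < L.length) :
    G.state B0 (L.take (p + 1)) = G.stepPair (G.state B0 (L.take p)) L[p] := by
  rw [state, state, List.take_add_one, List.getElem?_eq_getElem hp, List.foldl_append]
  rfl

theorem monotone_state_take_fst : Monotone fun p => (G.state B0 (L.take p)).1 := by
  refine monotone_nat_of_le_succ fun p x y h => ?_
  by_cases hp : p < L.length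
  · rw [G.state_take_succ_s10 B0 L hp]
    exact G.mergeStep_of_rel h
  · rwa [List.take_of_length_le (by omega),
      ← List.take_of_length_le (l := L) (by omega : L.length ≤ p)]

theorem state_take_succ_snd_rel {p : ℕ} {x y : V} (h : (G.state B0 (L.take (p + 1))).2 x y) :
    (G.state B0 (L.take p)).2 x y ∨ (G.state B0 (L.take (p + 1))).1 x y := by
  by_cases hp : p < L.length
  · rw [G.state_take_succ_s10 B0 L hp] at h ⊢
    exact G.rel_or_mergeStep_of_blockStep h
  · rw [List.take_of_length_le (by omega)] at h
    rw [List.take_of_length_le (by omega : L.length ≤ p)]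
    exact .inl h

/-- The variable `u_{k+1}` (that is, `w k`) occurs in `X_{v(e),v'(e)}`. -/
def XHasVar (k : ℕ) (e : E) : Prop :=
  ∀ a b, G.ends e = s(a, b) → G.iIdx B0 L a b ≤ k ∧ k < G.jIdx B0 L a b

/-- The variable `u_{k+1}` (that is, `w k`) occurs in `Y_e`. -/
def YHasVar (k : ℕ) (e : E) : Prop :=
  ∀ a b, G.ends e = s(a, b) → G.iIdx B0 L a b ≤ k ∧ k + 1 < G.jIdx B0 L a b

theorem one_le_kcount [Fintype E] (hTB : G.IsTransBlockSeq B0 L) {k : ℕ} (hk : k < L.length) :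
    1 ≤ G.kcount B0 L k :=
  Finset.card_pos.2 ⟨L[k], Finset.mem_filter.2 ⟨Finset.mem_univ _, hTB k hk⟩⟩

section ContactIndices

variable {G B0 L} (hspan : ∀ v w : V, (G.state B0 L).1 v w)
include hspan

theorem state_take_jIdx_fst (a b : V) : (G.state B0 (L.take (G.jIdx B0 L a b))).1 a b :=
  Nat.sInf_mem (s := {p | (G.state B0 (L.take p)).1 a b}) ⟨L.length, by simpa using hspan a b⟩

theorem jIdx_le_length (a b : V) : G.jIdx B0 L a b ≤ L.length :=
  Nat.sInf_le (by simpa using hspan a b)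

theorem lt_jIdx_iff {a b : V} {p : ℕ} :
    p < G.jIdx B0 L a b ↔ ¬ (G.state B0 (L.take p)).1 a b :=
  ⟨Nat.notMem_of_lt_sInf, fun h => lt_of_not_ge fun hp =>
    h (G.monotone_state_take_fst B0 L hp a b (state_take_jIdx_fst hspan a b))⟩

variable (hB0 : Equivalence B0) (hTB : G.IsTransBlockSeq B0 L)
include hB0 hTB

/-- The edge that merges `a` and `b` is trans-block when contracted. -/
theorem not_state_take_pred_jIdx_snd {a b : V} (hab : a ≠ b) :
    ¬ (G.state B0 (L.take (G.jIdx B0 L a b - 1))).2 a b := by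
  obtain ⟨q, hq⟩ : ∃ q, G.jIdx B0 L a b = q + 1 :=
    Nat.exists_eq_add_one.2 ((lt_jIdx_iff hspan).2 hab)
  have hqL : q < L.length := by have := jIdx_le_length hspan a b; omega
  have hmerge := state_take_jIdx_fst hspan a b
  rw [hq, G.state_take_succ_s10 B0 L hqL] at hmerge
  obtain ⟨c, d, hcd⟩ := G.exists_ends_eq L[q]
  rw [hq, Nat.add_sub_cancel]
  exact G.not_rel_of_mergeStep (G.isContractionState_state B0 hB0 _) hcd
    (hTB q hqL c d hcd) ((lt_jIdx_iff hspan).1 (by omega)) hmerge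

theorem not_state_take_snd_iff (a b : V) (p : ℕ) :
    ¬ (G.state B0 (L.take p)).2 a b ↔ G.iIdx B0 L a b ≤ p ∧ p < G.jIdx B0 L a b := by
  by_cases hab : a = b
  · subst hab
    have : G.jIdx B0 L a a = 0 := Nat.sInf_eq_zero.2 (.inl rfl)
    simpa [this] using (G.isContractionState_state B0 hB0 _).2.1.refl a
  rw [iIdx, if_neg hab]
  constructor
  · intro h
    exact ⟨Nat.sInf_le h, (lt_jIdx_iff hspan).2 fun hM =>
      h ((G.isContractionState_state B0 hB0 _).2.2 a b hM)⟩
  · rintro ⟨hi, hj⟩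
    induction p, hi using Nat.le_induction with
    | base =>
      exact Nat.sInf_mem (s := {p | ¬ (G.state B0 (L.take p)).2 a b})
        ⟨_, not_state_take_pred_jIdx_snd hspan hB0 hTB hab⟩
    | succ m _ ih =>
      exact fun h => (G.state_take_succ_snd_rel B0 L h).elim (ih (by omega))
        ((lt_jIdx_iff hspan).1 hj)

theorem transBlock_iff_xHasVar (k : ℕ) (e : E) :
    G.TransBlock (G.state B0 (L.take k)).2 e ↔ G.XHasVar B0 L k e :=
  forall₂_congr fun a b => imp_congr_right fun _ => not_state_take_snd_iff hspan hB0 hTB a b k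

theorem iIdx_le_and_jIdx_eq_of_ends_getElem {q : ℕ} (hq : q < L.length) {a b : V}
    (hab : G.ends L[q] = s(a, b)) : G.iIdx B0 L a b ≤ q ∧ G.jIdx B0 L a b = q + 1 := by
  have hmerged : (G.state B0 (L.take (q + 1))).1 a b := by
    rw [G.state_take_succ_s10 B0 L hq]
    exact G.mergeStep_of_ends hab
  have := (not_state_take_snd_iff hspan hB0 hTB a b q).1 (hTB q hq a b hab)
  have : G.jIdx B0 L a b ≤ q + 1 := Nat.sInf_le hmerged
  omega

theorem xHasVar_getElem_iff {k q : ℕ} (hq : q < L.length) :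
    G.XHasVar B0 L k L[q] ↔ G.YHasVar B0 L k L[q] ∨ k = q := by
  constructor
  · intro h
    refine or_iff_not_imp_right.2 fun hkq a b hab => ?_
    have := h a b hab
    have := iIdx_le_and_jIdx_eq_of_ends_getElem hspan hB0 hTB hq hab
    omega
  · rintro (h | rfl) a b hab
    · have := h a b hab
      omega
    · have := iIdx_le_and_jIdx_eq_of_ends_getElem hspan hB0 hTB hq hab
      omega

theorem not_yHasVar_getElem {k : ℕ} (hk : k < L.length) : ¬ G.YHasVar B0 L k L[k] := by
  obtain ⟨a, b, hab⟩ := G.exists_ends_eq L[k]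
  have := iIdx_le_and_jIdx_eq_of_ends_getElem hspan hB0 hTB hk hab
  intro hY
  have := hY a b hab
  omega

theorem filter_xHasVar_toFinset {k : ℕ} (hk : k < L.length) :
    L.toFinset.filter (G.XHasVar B0 L k) =
      insert L[k] (L.toFinset.filter (G.YHasVar B0 L k)) := by
  ext e
  simp only [Finset.mem_filter, Finset.mem_insert, List.mem_toFinset]
  constructor
  · rintro ⟨he, hX⟩
    obtain ⟨⟨q, hq⟩, rfl⟩ := List.mem_iff_get.1 he
    rcases (xHasVar_getElem_iff hspan hB0 hTB hq).1 hX with hY | rfl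
    · exact .inr ⟨he, hY⟩
    · exact .inl rfl
  · rintro (rfl | ⟨he, hY⟩)
    · exact ⟨L.getElem_mem hk, (xHasVar_getElem_iff hspan hB0 hTB hk).2 (.inr rfl)⟩
    · obtain ⟨⟨q, hq⟩, rfl⟩ := List.mem_iff_get.1 he
      exact ⟨he, (xHasVar_getElem_iff hspan hB0 hTB hq).2 (.inl hY)⟩

/-- Of the `k_k` trans-block edges of `G_k`, only `L[k]` contributes no factor `u_{k+1}`. -/
theorem card_filter_yHasVar_add_card_filter_xHasVar [Fintype E] {k : ℕ} (hk : k < L.length) :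
    (L.toFinset.filter (G.YHasVar B0 L k)).card +
      ((Finset.univ \ L.toFinset).filter (G.XHasVar B0 L k)).card + 1 = G.kcount B0 L k := by
  have hX : G.kcount B0 L k = (Finset.univ.filter (G.XHasVar B0 L k)).card := by
    rw [kcount, Finset.filter_congr fun e _ => transBlock_iff_xHasVar hspan hB0 hTB k e]
  have hsplit : Finset.univ.filter (G.XHasVar B0 L k) =
      L.toFinset.filter (G.XHasVar B0 L k) ∪
        (Finset.univ \ L.toFinset).filter (G.XHasVar B0 L k) := by
    rw [← Finset.filter_union, Finset.union_sdiff_of_subset (Finset.subset_univ _)]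
  rw [hX, hsplit,
    Finset.card_union_of_disjoint (Finset.disjoint_filter_filter Finset.disjoint_sdiff),
    filter_xHasVar_toFinset hspan hB0 hTB hk, Finset.card_insert_of_notMem]
  · omega
  · simpa only [Finset.mem_filter, not_and] using fun _ => not_yHasVar_getElem hspan hB0 hTB hk

theorem integrand_eq_prod_pow_kcount [Fintype E] {n : ℕ} (hn : n ≤ L.length)
    (w : Fin n → ℝ) :
    (∏ e ∈ L.toFinset, G.Yent B0 L n w e) *
        ∏ e ∈ Finset.univ \ L.toFinset, G.XentE B0 L n w e =
      ∏ k : Fin n, w k ^ (G.kcount B0 L k - 1) := by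
  have hY : ∀ e, G.Yent B0 L n w e = ∏ k : Fin n, if G.YHasVar B0 L k e then w k else 1 :=
    fun _ => rfl
  have hX : ∀ e, G.XentE B0 L n w e = ∏ k : Fin n, if G.XHasVar B0 L k e then w k else 1 :=
    fun _ => rfl
  simp only [hY, hX, Finset.prod_prod_ite_eq_prod_pow, ← Finset.prod_mul_distrib, ← pow_add]
  refine Finset.prod_congr rfl fun k _ => ?_
  have := card_filter_yHasVar_add_card_filter_xHasVar hspan hB0 hTB (k.2.trans_le hn)
  rw [← this, Nat.add_sub_cancel]

end ContactIndices

end Multigraph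

theorem integral_weight_eq_prod_inv_kcount_general
    {V E : Type} [Fintype V] [Fintype E]
    (G : Multigraph V E)
    (B0 : V → V → Prop) (hB0 : Equivalence B0)
    (L : List E) (hlen : L.length = Fintype.card V - 1)
    (hTB : G.IsTransBlockSeq B0 L)
    (hspan : ∀ v w : V, (G.state B0 L).1 v w) :
    (∫ w in Set.univ.pi fun _ : Fin (Fintype.card V - 1) => Set.Icc (0 : ℝ) 1,
        (∏ e ∈ L.toFinset, G.Yent B0 L (Fintype.card V - 1) w e) *
          ∏ e ∈ Finset.univ \ L.toFinset, G.XentE B0 L (Fintype.card V - 1) w e) =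
      ∏ p ∈ Finset.range (Fintype.card V - 1), ((G.kcount B0 L p : ℝ))⁻¹ := by
  simp_rw [Multigraph.integrand_eq_prod_pow_kcount hspan hB0 hTB hlen.ge,
    integral_unitCube_prod_pow]
  rw [Fin.prod_univ_eq_prod_range (fun p => (((G.kcount B0 L p - 1 : ℕ) : ℝ) + 1)⁻¹)]
  refine Finset.prod_congr rfl fun p hp => ?_
  rw [← Nat.cast_add_one,
    Nat.sub_add_cancel (G.one_le_kcount B0 L hTB (hlen ▸ Finset.mem_range.1 hp))]

/-- for a trans-block ordered spanning tree `T_τ` (given as the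
list `L`), the weight `w^Π(G, T_τ)`, given by the integral over
`[0,1]^{|V|-1}` of the product of the tree edge factors `Y_ℓ(u)` (over
`ℓ ∈ T`) and of the contact matrix entries `X_{v(ℓ),v'(ℓ)}(u)` (over
`ℓ ∉ T`), equals `∏_{p=0}^{|V|-2} 1/k_p`. -/
theorem integral_weight_eq_prod_inv_kcount
    {V E : Type} [Fintype V] [Fintype E] [Nonempty V]
    (G : Multigraph V E) (hG : G.IsConnected)
    (B0 : V → V → Prop) (hB0 : Equivalence B0)
    (hnt : ∃ v w : V, ¬ B0 v w)
    (L : List E) (hlen : L.length = Fintype.card V - 1) (hnd : L.Nodup)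
    (hTB : G.IsTransBlockSeq B0 L)
    (hspan : ∀ v w : V, (G.state B0 L).1 v w) :
    (∫ w in Set.univ.pi fun _ : Fin (Fintype.card V - 1) => Set.Icc (0 : ℝ) 1,
        (∏ e ∈ L.toFinset, G.Yent B0 L (Fintype.card V - 1) w e) *
          ∏ e ∈ Finset.univ \ L.toFinset, G.XentE B0 L (Fintype.card V - 1) w e) =
      ∏ p ∈ Finset.range (Fintype.card V - 1), ((G.kcount B0 L p : ℝ))⁻¹ :=
  integral_weight_eq_prod_inv_kcount_general G B0 hB0 L hlen hTB hspan
end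

section
/- The symmetric weight of a graph is unchanged by deleting its self-loops: if G' = G − L where L is the set of self-loop edges of G, then for every spanning tree T of G, w_s(G,T) = w_s(G',T). -/
open scoped Classical
open MeasureTheory

/-! Kruskal's algorithm never selects a self-loop, whose endpoints are trivially connected, and
its connectivity tests only ever involve selected, hence non-loop, edges. So the tree it selects
under an ordering `σ` of all edges is the one it selects in the loopless graph under the ordering
that `σ` induces on the non-loop edges. Precomposing `σ` with a permutation of the non-loop edges
(fixing the loops) permutes the induced ordering in the same way, so every ordering of the
non-loop edges is induced by equally many orderings of all edges, and the two fractions agree. -/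

open Equiv Fintype

section RestrictOrder

variable {α β : Type*} (p : α → Prop) [DecidablePred p]

namespace List

def filterSubtype (l : List α) : List (Subtype p) :=
  l.filterMap fun a => if h : p a then some ⟨a, h⟩ else none

variable {p}

lemma filterSubtype_cons_of_pos {a : α} (h : p a) (l : List α) :
    (a :: l).filterSubtype p = ⟨a, h⟩ :: l.filterSubtype p := by
  simp [filterSubtype, h]

lemma filterSubtype_cons_of_neg {a : α} (h : ¬ p a) (l : List α) :
    (a :: l).filterSubtype p = l.filterSubtype p := by
  simp [filterSubtype, h]

@[simp]
lemma mem_filterSubtype {l : List α} {x : Subtype p} : x ∈ l.filterSubtype p ↔ x.1 ∈ l := by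
  simp [filterSubtype]

lemma Nodup.filterSubtype {l : List α} (h : l.Nodup) : (l.filterSubtype p).Nodup :=
  h.filterMap fun a b x => by split_ifs <;> grind

lemma filterSubtype_map_ofSubtype (g : Equiv.Perm (Subtype p)) (l : List α) :
    (l.map (Perm.ofSubtype g)).filterSubtype p = (l.filterSubtype p).map g := by
  simp only [filterSubtype, filterMap_map, map_filterMap]
  congr 1
  funext a
  by_cases h : p a
  · simp [h, Perm.ofSubtype_apply_of_mem, (g _).2]
  · simp [h, Perm.ofSubtype_apply_of_not_mem]

end List

lemma card_preimage_eq_mul_of_card_fiber [Fintype α] [Fintype β] [DecidableEq β] (f : α → β)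
    {c : ℕ} (hc : ∀ b, card {a // f a = b} = c) (Q : β → Prop) :
    card {a // Q (f a)} = card {b // Q b} * c := by
  rw [← card_congr (sigmaSubtypeFiberEquivSubtype f fun _ => Iff.rfl), card_sigma]
  simp [hc]

lemma ofFn_symm_injective [Fintype β] {τ τ' : β ≃ Fin (card β)}
    (h : List.ofFn τ.symm = List.ofFn τ'.symm) : τ = τ' :=
  symm_bijective.injective (Equiv.coe_inj.mp (List.ofFn_injective h))

lemma exists_ofFn_symm_eq [Fintype β] {l : List β} (nd : l.Nodup) (hl : ∀ x, x ∈ l) :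
    ∃ τ : β ≃ Fin (card β), List.ofFn τ.symm = l := by
  have hlen : l.length = card β := by simpa using card_congr (nd.getEquivOfForallMemList l hl)
  refine ⟨((nd.getEquivOfForallMemList l hl).symm.trans (finCongr hlen)), ?_⟩
  rw [List.ofFn_congr hlen.symm]
  exact List.ofFn_get l

variable [Fintype α]

lemma nodup_filterSubtype_ofFn (σ : α ≃ Fin (card α)) :
    ((List.ofFn σ.symm).filterSubtype p).Nodup :=
  (List.nodup_ofFn.mpr σ.symm.injective).filterSubtype

lemma mem_filterSubtype_ofFn (σ : α ≃ Fin (card α)) (x : Subtype p) :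
    x ∈ (List.ofFn σ.symm).filterSubtype p :=
  List.mem_filterSubtype.mpr (List.mem_ofFn.mpr ⟨σ x, σ.symm_apply_apply x⟩)

noncomputable def restrictOrder (σ : α ≃ Fin (card α)) :
    Subtype p ≃ Fin (card (Subtype p)) :=
  (exists_ofFn_symm_eq (nodup_filterSubtype_ofFn p σ) (mem_filterSubtype_ofFn p σ)).choose

lemma ofFn_restrictOrder_symm (σ : α ≃ Fin (card α)) :
    List.ofFn (restrictOrder p σ).symm = (List.ofFn σ.symm).filterSubtype p :=
  (exists_ofFn_symm_eq (nodup_filterSubtype_ofFn p σ) (mem_filterSubtype_ofFn p σ)).choose_spec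

lemma restrictOrder_symm_trans (g : Equiv.Perm (Subtype p)) (σ : α ≃ Fin (card α)) :
    restrictOrder p ((Perm.ofSubtype g).symm.trans σ) = g.symm.trans (restrictOrder p σ) := by
  apply ofFn_symm_injective
  calc List.ofFn (restrictOrder p ((Perm.ofSubtype g).symm.trans σ)).symm
      = ((List.ofFn σ.symm).map (Perm.ofSubtype g)).filterSubtype p := by
        rw [ofFn_restrictOrder_symm, List.map_ofFn]; rfl
    _ = (List.ofFn (restrictOrder p σ).symm).map g := by
        rw [List.filterSubtype_map_ofSubtype, ofFn_restrictOrder_symm]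
    _ = List.ofFn (g.symm.trans (restrictOrder p σ)).symm := by
        rw [List.map_ofFn]; rfl

lemma card_restrictOrder_fiber (τ₁ τ₂ : Subtype p ≃ Fin (card (Subtype p))) :
    card {σ : α ≃ Fin (card α) // restrictOrder p σ = τ₁} =
      card {σ : α ≃ Fin (card α) // restrictOrder p σ = τ₂} := by
  let g : Equiv.Perm (Subtype p) := τ₁.trans τ₂.symm
  refine card_congr ((Perm.ofSubtype g).equivCongr (Equiv.refl _) |>.subtypeEquiv fun σ => ?_)
  change _ ↔ restrictOrder p ((Perm.ofSubtype g).symm.trans σ) = τ₂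
  rw [restrictOrder_symm_trans, trans_cancel_left, symm_symm]
  simp [g, trans_assoc]

lemma card_restrictOrder_preimage_div (P : (Subtype p ≃ Fin (card (Subtype p))) → Prop) :
    (card {σ : α ≃ Fin (card α) // P (restrictOrder p σ)} : ℚ) / (card α).factorial =
      card {τ // P τ} / (card (Subtype p)).factorial := by
  obtain ⟨c, hc⟩ :
      ∃ c, ∀ τ, card {σ : α ≃ Fin (card α) // restrictOrder p σ = τ} = c :=
    ⟨_, fun τ => card_restrictOrder_fiber p τ (equivFin _)⟩
  have htot : (card α).factorial = (card (Subtype p)).factorial * c := by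
    rw [← card_equiv (equivFin α), ← card_equiv (equivFin (Subtype p)),
      ← card_congr (sigmaFiberEquiv (restrictOrder p)), card_sigma]
    simp [hc]
  have hc0 : (c : ℚ) ≠ 0 := by
    rintro hc0
    simp [Nat.cast_eq_zero.mp hc0, Nat.factorial_ne_zero] at htot
  rw [card_preimage_eq_mul_of_card_fiber (restrictOrder p) hc P, htot]
  push_cast
  exact mul_div_mul_right _ _ hc0

end RestrictOrder

namespace Multigraph

variable {V E : Type} (G : Multigraph V E) (p : E → Prop)

def restrictEdges : Multigraph V (Subtype p) :=
  ⟨fun e => G.ends e.1⟩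

@[simp]
lemma restrictEdges_ends (e : Subtype p) : (G.restrictEdges p).ends e = G.ends e :=
  rfl

noncomputable def greedyStep (S : Finset E) (e : E) : Finset E :=
  if ∀ a b, G.ends e = s(a, b) → ¬ G.Connects S a b then insert e S else S

lemma kruskal_eq_foldl_greedyStep [Fintype E] (σ : E ≃ Fin (Fintype.card E)) :
    G.kruskal σ = (List.ofFn σ.symm).foldl G.greedyStep ∅ := by
  rw [List.ofFn_eq_map]
  rfl

lemma greedyStep_of_isDiag {e : E} (he : (G.ends e).IsDiag) (S : Finset E) :
    G.greedyStep S e = S := by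
  induction h : G.ends e using Sym2.ind with
  | _ a b =>
    rw [h, Sym2.mk_isDiag_iff] at he
    subst he
    exact if_neg fun hS => hS a a h .refl

lemma connects_image_val_iff (S : Finset (Subtype p)) {a b : V} :
    G.Connects (S.image Subtype.val) a b ↔ (G.restrictEdges p).Connects S a b := by
  refine ⟨fun h => Relation.ReflTransGen.mono ?_ _ _ h,
    fun h => Relation.ReflTransGen.mono ?_ _ _ h⟩
  · rintro x y ⟨_, hmem, hxy⟩
    obtain ⟨e, he, rfl⟩ := Finset.mem_image.mp hmem
    exact ⟨e, he, hxy⟩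
  · rintro x y ⟨e, he, hxy⟩
    exact ⟨e.1, Finset.mem_image_of_mem _ he, hxy⟩

lemma greedyStep_image_val (S : Finset (Subtype p)) (e : Subtype p) :
    G.greedyStep (S.image Subtype.val) e =
      ((G.restrictEdges p).greedyStep S e).image Subtype.val := by
  set G' := G.restrictEdges p
  have hcond : (∀ a b, G.ends e = s(a, b) → ¬ G.Connects (S.image Subtype.val) a b) ↔
      ∀ a b, G'.ends e = s(a, b) → ¬ G'.Connects S a b := by
    simp only [G', connects_image_val_iff, restrictEdges_ends]
  by_cases h : ∀ a b, G'.ends e = s(a, b) → ¬ G'.Connects S a b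
  · rw [greedyStep, greedyStep, if_pos (hcond.mpr h), if_pos h]
    ext
    simp
  · rw [greedyStep, greedyStep, if_neg (mt hcond.mp h), if_neg h]

lemma foldl_greedyStep_image_val (hp : ∀ e, ¬ p e → (G.ends e).IsDiag)
    (L : List E) (S : Finset (Subtype p)) :
    L.foldl G.greedyStep (S.image Subtype.val) =
      ((L.filterSubtype p).foldl (G.restrictEdges p).greedyStep S).image Subtype.val := by
  induction L generalizing S with
  | nil => rfl
  | cons e L ih =>
    by_cases he : p e
    · rw [List.filterSubtype_cons_of_pos he, List.foldl_cons, List.foldl_cons,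
        greedyStep_image_val _ _ _ ⟨e, he⟩]
      exact ih _
    · rw [List.filterSubtype_cons_of_neg he, List.foldl_cons, greedyStep_of_isDiag _ (hp e he)]
      exact ih S

lemma kruskal_eq_image_kruskal_restrictEdges [Fintype E] (hp : ∀ e, ¬ p e → (G.ends e).IsDiag)
    (σ : E ≃ Fin (Fintype.card E)) :
    G.kruskal σ = ((G.restrictEdges p).kruskal (restrictOrder p σ)).image Subtype.val := by
  rw [kruskal_eq_foldl_greedyStep, kruskal_eq_foldl_greedyStep, ofFn_restrictOrder_symm,
    ← foldl_greedyStep_image_val _ _ hp]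
  rfl

theorem ws_image_val_eq_ws_restrictEdges [Fintype V] [Fintype E]
    (hp : ∀ e, ¬ p e → (G.ends e).IsDiag) (T : Finset (Subtype p)) :
    G.ws (T.image Subtype.val) = (G.restrictEdges p).ws T := by
  have hkruskal (σ : E ≃ Fin (Fintype.card E)) :
      G.kruskal σ = T.image Subtype.val ↔
        (G.restrictEdges p).kruskal (restrictOrder p σ) = T := by
    rw [G.kruskal_eq_image_kruskal_restrictEdges p hp σ]
    exact (Finset.image_injective Subtype.val_injective).eq_iff
  have h := card_restrictOrder_preimage_div p fun τ => (G.restrictEdges p).kruskal τ = T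
  rw [ws, card_congr (subtypeEquivRight hkruskal), ws]
  simp only [card_eq_nat_card] at h ⊢
  exact h

end Multigraph

theorem ws_delete_self_loops_general
    {V E : Type} [Fintype V] [Fintype E] [DecidableEq V] [DecidableEq E]
    (G : Multigraph V E) (T : Finset E)
    (T' : Finset {e : E // ¬ (G.ends e).IsDiag})
    (hT' : T = T'.image Subtype.val) :
    G.ws T =
      (Multigraph.mk fun e : {e : E // ¬ (G.ends e).IsDiag} => G.ends e.1).ws T' := by
  subst hT'
  show G.ws _ = (G.restrictEdges _).ws T'
  convert G.ws_image_val_eq_ws_restrictEdges _ (fun _ => not_not.mp) T'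

/-- the symmetric weight is unchanged by deleting the
self-loops of `G`: if `G'` is `G` with the self-loop edges removed (its edge
type being the subtype of non-self-loop edges) and `T'` is the copy of the
spanning tree `T` in `G'`, then `w_s(G,T) = w_s(G',T')`. -/
theorem ws_delete_self_loops
    {V E : Type} [Fintype V] [Fintype E] [DecidableEq V] [DecidableEq E]
    (G : Multigraph V E) (T : Finset E) (hT : G.IsSpanningTree T)
    (T' : Finset {e : E // ¬ (G.ends e).IsDiag})
    (hT' : T = T'.image Subtype.val) :
    G.ws T =
      (Multigraph.mk fun e : {e : E // ¬ (G.ends e).IsDiag} => G.ends e.1).ws T' :=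
  ws_delete_self_loops_general G T T' hT'
end
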